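/- Let G = (V, E) with V = {v_1, …, v_n} be an input network, let g_{v_1}, …, g_{v_n} : ℕ → ℝ be nondecreasing nonnegative functions, let c ≥ 0 be a common investment cost, let a ≥ 0, and let H = (V, E') be a directed altruistic network whose every edge joins G-adjacent vertices. Construct the graph G' = (V', E'') with V' = ⋃_{i∈[n]} V_i ∪ {u_i : i∈[n]}, where V_i = {v^i_j : j ∈ [2+n(i−1)]}, and E'' = ⋃_{i∈[n]} {{u_i, v^i_j} : j ∈ [2+n(i−1)]} ∪ {{u_i,u_j} : {v_i,v_j} ∈ E}; let H' be the directed graph on V' with edge set {(u_i,u_j) : (v_i,v_j) ∈ E'}; let g : ℕ → ℝ be defined by g(x) = c·x for x ∈ {0,1,2} and g(x) = g(x−1) + Δg_{v_{f(x−1)}}(h(x−1)) for x > 2, where f(x) = 1 + ⌊(x−2)/n⌋ and h(x) = x − (2 + n(f(x)−1)). Given x = (x_{v_i})_{i∈[n]} ∈ {0,1}^V, define x' ∈ {0,1}^{V'} by x'_{u_i} = x_{v_i} for all i∈[n] and x'_w = 1 for all w ∈ V' \ {u_i : i∈[n]}. Then x is a pure strategy Nash equilibrium of the heterogeneous BNPG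 game with asymmetric altruism (G, H, (g_{v_i}), c, a) if and only if x' is a pure strategy Nash equilibrium of the fully homogeneous BNPG game with asymmetric altruism (G', H', g, c, a) in which every player has externality function g and cost c. -/

import Mathlib

open Finset

/-- `Δg(t) = g(t+1) - g(t)`. -/
def dg (g : ℕ → ℝ) (t : ℕ) : ℝ := g (t + 1) - g t

/-- Number of `G`-neighbors of `v` playing 1 in the profile `x`. -/
def nv {W : Type*} [Fintype W] [DecidableEq W] (G : SimpleGraph W) [DecidableRel G.Adj]
    (x : W → Bool) (v : W) : ℕ :=
  ((G.neighborFinset v).filter (fun u => x u = true)).card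

/-- Utility of player `v` in a BNPG game with altruism: input graph `G`,
altruistic (out-)neighborhoods `N`, externality functions `g`, costs `c`,
altruism parameter `a`. -/
def util {W : Type*} [Fintype W] [DecidableEq W] (G : SimpleGraph W) [DecidableRel G.Adj]
    (N : W → Finset W) (g : W → ℕ → ℝ) (c : W → ℝ) (a : ℝ)
    (x : W → Bool) (v : W) : ℝ :=
  g v ((x v).toNat + nv G x v)
    + a * ∑ u ∈ N v, g u ((x u).toNat + nv G x u)
    - c v * (x v).toNat

/-- Pure strategy Nash equilibrium of a BNPG game with altruism. -/
def isPSNE {W : Type*} [Fintype W] [DecidableEq W] (G : SimpleGraph W) [DecidableRel G.Adj]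
    (N : W → Finset W) (g : W → ℕ → ℝ) (c : W → ℝ) (a : ℝ) (x : W → Bool) : Prop :=
  ∀ v : W, ∀ b : Bool,
    util G N g c a x v ≥ util G N g c a (Function.update x v b) v

def fIdx (n x : ℕ) : ℕ := 1 + (x - 2) / n

def hOff (n x : ℕ) : ℕ := x - (2 + n * (fIdx n x - 1))

/-- The common externality function of the fully homogeneous game. -/
def gg (n : ℕ) (gv : ℕ → ℕ → ℝ) (c : ℝ) : ℕ → ℝ
  | 0 => 0
  | 1 => c
  | 2 => c * 2
  | x + 3 => gg n gv c (x + 2) + dg (gv (fIdx n (x + 2))) (hOff n (x + 2))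

/-- Vertex set of the constructed fully homogeneous game: `Sum.inl ⟨i, j⟩` is the
`j`-th pendant leaf `v^i_j` attached to `u_i` (player `i : Fin n` stands for
`v_{i+1}`, and it gets `2 + n·i` leaves), and `Sum.inr i` is `u_i`. -/
abbrev Vred (n : ℕ) := (Σ i : Fin n, Fin (2 + n * i.val)) ⊕ Fin n

/-- Adjacency of the constructed input network: each `u_i` is adjacent to its own
leaves, and `u_i ~ u_j` iff `v_i ~ v_j` in the original network. -/
def adjRed {n : ℕ} (G : SimpleGraph (Fin n)) [DecidableRel G.Adj] :
    Vred n → Vred n → Bool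
  | Sum.inl ⟨i, _⟩, Sum.inr j => decide (i = j)
  | Sum.inr j, Sum.inl ⟨i, _⟩ => decide (i = j)
  | Sum.inr i, Sum.inr j => decide (G.Adj i j)
  | _, _ => false

/-- The constructed input network `G'`. -/
def Gred {n : ℕ} (G : SimpleGraph (Fin n)) [DecidableRel G.Adj] :
    SimpleGraph (Vred n) where
  Adj a b := adjRed G a b = true
  symm := by
    constructor
    rintro (⟨i, ji⟩ | i) (⟨i', ji'⟩ | i') h <;> simp_all [adjRed]
    exact h.symm
  loopless := by
    constructor
    rintro (⟨i, ji⟩ | i) h <;> simp [adjRed] at h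

instance {n : ℕ} (G : SimpleGraph (Fin n)) [DecidableRel G.Adj] :
    DecidableRel (Gred G).Adj :=
  fun a b => inferInstanceAs (Decidable (adjRed G a b = true))

/-- The constructed altruistic network `H'`: `(u_i, u_j)` is an altruistic edge iff
`(v_i, v_j)` was one; leaves have no altruistic edges. -/
def Nred {n : ℕ} (N : Fin n → Finset (Fin n)) : Vred n → Finset (Vred n)
  | Sum.inl _ => ∅
  | Sum.inr i => (N i).image Sum.inr

/-!
Attaching to `u_i` exactly `2 + n·i` pendant leaves that always invest shifts the neighbour count
of `u_i` into the `i`-th block of `n` consecutive arguments of `g`, on which the increments of `g`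
are those of `g_{v_i}`. Hence `u_i` gains exactly as much from investing as `v_i` does, altruistic
terms included. A leaf only sees the counts 0 and 1, where `g` has slope exactly `c`, so investing
is a best response for it.
-/

open Function

section General

variable {W : Type*} [Fintype W] [DecidableEq W] (G : SimpleGraph W) [DecidableRel G.Adj]

lemma nv_update_self (x : W → Bool) (v : W) (b : Bool) :
    nv G (update x v b) v = nv G x v := by
  unfold nv
  congr 1
  refine filter_congr fun u hu => ?_
  rw [update_of_ne (G.ne_of_adj ((G.mem_neighborFinset v u).1 hu)).symm]

lemma nv_update_true_of_adj (x : W → Bool) {u v : W} (h : G.Adj u v) :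
    nv G (update x v true) u = nv G (update x v false) u + 1 := by
  unfold nv
  have hfilter : (G.neighborFinset u).filter (fun w => update x v true w = true)
      = insert v ((G.neighborFinset u).filter (fun w => update x v false w = true)) := by
    ext w
    by_cases hw : w = v
    · subst hw
      simp [h]
    · simp [hw]
  rw [hfilter, card_insert_of_notMem (by simp)]

lemma nv_lt_card (x : W → Bool) (v : W) : nv G x v < Fintype.card W :=
  (card_filter_le _ _).trans_lt (G.degree_lt_card_verts v)

lemma toNat_add_nv_lt_card (x : W → Bool) {u v : W} (h : G.Adj u v) (hv : x v = false) :
    (x u).toNat + nv G x u < Fintype.card W := by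
  have hssub : (G.neighborFinset u).filter (fun w => x w = true) ⊂ G.neighborFinset u :=
    (ssubset_iff_of_subset (filter_subset _ _)).2 ⟨v, by simpa using h, by simp [hv]⟩
  have hlt_deg : nv G x u < G.degree u := card_lt_card hssub
  have hdeg_lt : G.degree u < Fintype.card W := G.degree_lt_card_verts u
  have htoNat : (x u).toNat ≤ 1 := Bool.toNat_le _
  omega

variable (N : W → Finset W) (g : W → ℕ → ℝ) (c : W → ℝ) (a : ℝ)

def investGain (x : W → Bool) (v : W) : ℝ :=
  util G N g c a (update x v true) v - util G N g c a (update x v false) v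

lemma isPSNE_iff_investGain (x : W → Bool) :
    isPSNE G N g c a x ↔ ∀ v, (x v = true → 0 ≤ investGain G N g c a x v) ∧
      (x v = false → investGain G N g c a x v ≤ 0) := by
  refine forall_congr' fun v => ?_
  unfold investGain
  cases hxv : x v
  · have hx : update x v false = x := by rw [← hxv, update_eq_self]
    simp only [Bool.forall_bool, hx, ge_iff_le, le_refl, true_and, Bool.false_eq_true,
      false_imp_iff, forall_const]
    exact sub_nonpos.symm
  · have hx : update x v true = x := by rw [← hxv, update_eq_self]
    simp only [Bool.forall_bool, hx, ge_iff_le, le_refl, and_true, Bool.true_eq_false,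
      false_imp_iff, forall_const]
    exact sub_nonneg.symm

-- Since `H ⊆ G`, investing raises the count of every altruistic neighbour `u` of `v` by one.
lemma investGain_eq (x : W → Bool) (v : W) (hN : ∀ u ∈ N v, G.Adj v u) :
    investGain G N g c a x v = dg (g v) (nv G x v)
      + a * ∑ u ∈ N v, dg (g u) ((x u).toNat + nv G (update x v false) u) - c v := by
  have hterm : ∀ u ∈ N v,
      g u ((update x v true u).toNat + nv G (update x v true) u)
        - g u ((update x v false u).toNat + nv G (update x v false) u)
        = dg (g u) ((x u).toNat + nv G (update x v false) u) := by
    intro u hu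
    have hne : u ≠ v := (G.ne_of_adj (hN u hu)).symm
    rw [update_of_ne hne, update_of_ne hne, nv_update_true_of_adj G x (hN u hu).symm, dg,
      add_assoc]
  have hsum := sum_congr rfl hterm
  rw [sum_sub_distrib] at hsum
  have hself : dg (g v) (nv G x v) = g v (1 + nv G x v) - g v (nv G x v) := by
    rw [dg, add_comm]
  simp only [investGain, util, nv_update_self, update_self, Bool.toNat_true,
    Bool.toNat_false, zero_add, Nat.cast_one, Nat.cast_zero, hself]
  linear_combination a * hsum

end General

section Reduction

variable {n : ℕ} (G : SimpleGraph (Fin n)) [DecidableRel G.Adj]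

lemma gred_adj_of_mem_nred {N : Fin n → Finset (Fin n)} (hN : ∀ v : Fin n, ∀ u ∈ N v, G.Adj v u)
    (v : Vred n) : ∀ u ∈ Nred N v, (Gred G).Adj v u := by
  rcases v with l | i
  · simp [Nred]
  · simpa [Nred, Gred, adjRed] using hN i

lemma nv_gred_inr (y : Fin n → Bool) (i : Fin n) :
    nv (Gred G) (Sum.elim (fun _ => true) y) (Sum.inr i) = 2 + n * i.val + nv G y i := by
  unfold nv
  rw [SimpleGraph.neighborFinset_eq_filter, filter_filter,
    SimpleGraph.neighborFinset_eq_filter, filter_filter, card_filter, card_filter,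
    Fintype.sum_sum_type]
  congr 1
  · rw [← univ_sigma_univ, sum_sigma]
    simp only [Gred, adjRed, Sum.elim_inl, decide_eq_true_eq, and_true]
    rw [Fintype.sum_eq_single i fun j hj => by simp [hj]]
    simp
  · simp [Gred, adjRed]

lemma nv_gred_inl (y : Fin n → Bool) (l : Σ i : Fin n, Fin (2 + n * i.val)) :
    nv (Gred G) (Sum.elim (fun _ => true) y) (Sum.inl l) = (y l.1).toNat := by
  obtain ⟨i, j⟩ := l
  unfold nv
  rw [SimpleGraph.neighborFinset_eq_filter, filter_filter, card_filter, Fintype.sum_sum_type]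
  rw [← univ_sigma_univ, sum_sigma]
  simp only [Gred, adjRed, Bool.false_eq_true, false_and, if_false, sum_const_zero, zero_add,
    Sum.elim_inr, decide_eq_true_eq]
  rw [Fintype.sum_eq_single i fun j hj => by simp [Ne.symm hj]]
  cases y i <;> simp

variable (gv : ℕ → ℕ → ℝ) (c : ℝ)

lemma dg_gg_of_lt_two {t : ℕ} (ht : t < 2) : dg (gg n gv c) t = c := by
  interval_cases t <;> simp [dg, gg]; ring

-- `fIdx` and `hOff` locate `2 + n * i + t` as offset `t` in the block of `gv (i + 1)`.
lemma dg_gg_of_lt (i : ℕ) {t : ℕ} (ht : t < n) :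
    dg (gg n gv c) (2 + n * i + t) = dg (gv (i + 1)) t := by
  have hfIdx : fIdx n (n * i + t + 2) = i + 1 := by
    rw [fIdx, Nat.add_sub_cancel, Nat.mul_add_div (by omega), Nat.div_eq_of_lt ht]
    omega
  have hhOff : hOff n (n * i + t + 2) = t := by
    rw [hOff, hfIdx, Nat.add_sub_cancel]
    omega
  rw [dg, show 2 + n * i + t + 1 = (n * i + t) + 3 by ring,
    show 2 + n * i + t = (n * i + t) + 2 by ring, gg, hfIdx, hhOff, add_sub_cancel_left]

variable (N : Fin n → Finset (Fin n)) (a : ℝ)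

lemma investGain_gred_inl (y : Fin n → Bool) (l : Σ i : Fin n, Fin (2 + n * i.val)) :
    investGain (Gred G) (Nred N) (fun _ => gg n gv c) (fun _ => c) a
      (Sum.elim (fun _ => true) y) (Sum.inl l) = 0 := by
  have hleaf : Nred N (Sum.inl l) = ∅ := rfl
  rw [investGain_eq _ _ _ _ _ _ _ (by simp [hleaf]), hleaf, sum_empty, nv_gred_inl,
    dg_gg_of_lt_two gv c (Bool.toNat_lt _)]
  ring

lemma investGain_gred_inr (hN : ∀ v : Fin n, ∀ u ∈ N v, G.Adj v u) (y : Fin n → Bool)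
    (i : Fin n) :
    investGain (Gred G) (Nred N) (fun _ => gg n gv c) (fun _ => c) a
        (Sum.elim (fun _ => true) y) (Sum.inr i)
      = investGain G N (fun i => gv (i.val + 1)) (fun _ => c) a y i := by
  have hterm : ∀ j ∈ N i,
      dg (gg n gv c) ((Sum.elim (fun _ => true) y (Sum.inr j : Vred n)).toNat
          + nv (Gred G) (Sum.elim (fun _ => true) (update y i false)) (Sum.inr j))
        = dg (gv (j.val + 1)) ((y j).toNat + nv G (update y i false) j) := by
    intro j hj
    have hlt := toNat_add_nv_lt_card G (update y i false) (hN i j hj).symm (update_self ..)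
    rw [Fintype.card_fin, update_of_ne (G.ne_of_adj (hN i j hj)).symm] at hlt
    rw [Sum.elim_inr, nv_gred_inr, ← dg_gg_of_lt gv c j.val hlt]
    ring_nf
  rw [investGain_eq _ _ _ _ _ _ _ (gred_adj_of_mem_nred G hN _),
    investGain_eq _ _ _ _ _ _ _ (hN i), nv_gred_inr,
    dg_gg_of_lt gv c _ (by simpa using nv_lt_card G y i), Sum.update_elim_inr, Nred,
    sum_image (fun _ _ _ _ h => Sum.inr_injective h), sum_congr rfl hterm]

end Reduction

theorem statement12_general (n : ℕ)
    (G : SimpleGraph (Fin n)) [DecidableRel G.Adj]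
    (N : Fin n → Finset (Fin n)) (hN : ∀ v : Fin n, ∀ u ∈ N v, G.Adj v u)
    (gv : ℕ → ℕ → ℝ)
    (c : ℝ) (a : ℝ)
    (x : Fin n → Bool) :
    isPSNE G N (fun i => gv (i.val + 1)) (fun _ => c) a x ↔
      isPSNE (Gred G) (Nred N) (fun _ => gg n gv c) (fun _ => c) a
        (fun v => match v with
          | Sum.inl _ => true
          | Sum.inr i => x i) := by
  have hprofile : (fun v : Vred n => match v with
      | Sum.inl _ => true
      | Sum.inr i => x i) = Sum.elim (fun _ => true) x := by
    funext v
    cases v <;> rfl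
  rw [hprofile, isPSNE_iff_investGain, isPSNE_iff_investGain, Sum.forall]
  simp [investGain_gred_inl, investGain_gred_inr G gv c N a hN]

/-- `x` is a PSNE of the heterogeneous BNPG game with asymmetric
altruism `(G, N, (g_{v_i}), c, a)` (player `i : Fin n` has externality function
`gv (i+1)` and cost `c`) iff the profile `x'` — equal to `x` on the `u_i`'s and to
`1` on all leaves — is a PSNE of the fully homogeneous BNPG game with asymmetric
altruism `(G', H', g, c, a)`. -/
theorem statement12 (n : ℕ) (hn : 1 ≤ n)
    (G : SimpleGraph (Fin n)) [DecidableRel G.Adj]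
    (N : Fin n → Finset (Fin n)) (hN : ∀ v : Fin n, ∀ u ∈ N v, G.Adj v u)
    (gv : ℕ → ℕ → ℝ) (hmono : ∀ i, Monotone (gv i)) (hnn : ∀ i t, 0 ≤ gv i t)
    (c : ℝ) (hc : 0 ≤ c) (a : ℝ) (ha : 0 ≤ a)
    (x : Fin n → Bool) :
    isPSNE G N (fun i => gv (i.val + 1)) (fun _ => c) a x ↔
      isPSNE (Gred G) (Nred N) (fun _ => gg n gv c) (fun _ => c) a
        (fun v => match v with
          | Sum.inl _ => true
          | Sum.inr i => x i) :=
  statement12_general n G N hN gv c a x
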